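/- Suppose A ∈ C^{m×N} satisfies the RIPL of order (s,M) with δ_{s,M} < 1. Let κ, τ > 0, λ ≥ 0, e ∈ C^m, and let w be weights constant on each level. Suppose x, x' ∈ C^N are such that x' is supported on a (κs, M)-sparse set and ‖P_Ξ x − x'‖₂ ≤ τ ‖A P_{Ξ^c} x + e‖₂ + λ, where Ξ = Ξ₁ ∪ … ∪ Ξ_r and Ξ_i is the index set of the largest 2s_i entries of x in level i. Then ‖x − x'‖₂ ≤ (F_τ/√ξ) σ_{s,M}(x)_{ℓ¹_w} + τ‖e‖₂ + λ with F_τ = 1 + √2·τ, where ξ = min_i (w^{(i)})² s_i. -/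

import Mathlib

noncomputable section

open scoped BigOperators Classical

namespace SIL

/-- The index set of level `k` (0-indexed): indices `i` with `M k ≤ i < M (k+1)`. -/
def level (N : ℕ) (M : ℕ → ℕ) (k : ℕ) : Finset (Fin N) :=
  Finset.univ.filter fun i => M k ≤ (i : ℕ) ∧ (i : ℕ) < M (k + 1)

/-- Validity of the sparsity levels `0 = M₀ < M₁ < ⋯ < M_r = N`. -/
def LevelsOK (N r : ℕ) (M : ℕ → ℕ) : Prop :=
  M 0 = 0 ∧ M r = N ∧ ∀ k < r, M k < M (k + 1)

/-- Support of a vector, as a finset. -/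
def supp {N : ℕ} (x : Fin N → ℂ) : Finset (Fin N) :=
  Finset.univ.filter fun i => x i ≠ 0

/-- An `(s,M)`-sparse index set: at most `s k` indices in each level `k`. -/
def SparseSet (N r : ℕ) (M s : ℕ → ℕ) (Δ : Finset (Fin N)) : Prop :=
  ∀ k < r, (Δ ∩ level N M k).card ≤ s k

/-- An `(s,M)`-sparse in levels vector. -/
def Sparse {N : ℕ} (r : ℕ) (M s : ℕ → ℕ) (x : Fin N → ℂ) : Prop :=
  SparseSet N r M s (supp x)

/-- Squared ℓ² norm. -/
def n2sq {ι : Type*} [Fintype ι] (x : ι → ℂ) : ℝ := ∑ i, ‖x i‖ ^ 2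

/-- ℓ² norm. -/
def n2 {ι : Type*} [Fintype ι] (x : ι → ℂ) : ℝ := Real.sqrt (n2sq x)

/-- Weighted ℓ¹ norm. -/
def wn1 {ι : Type*} [Fintype ι] (w : ι → ℝ) (x : ι → ℂ) : ℝ := ∑ i, w i * ‖x i‖

/-- Standard inner product `⟨x,y⟩ = ∑ xᵢ conj(yᵢ)`. -/
def inr {ι : Type*} [Fintype ι] (x y : ι → ℂ) : ℂ := ∑ i, x i * star (y i)

/-- Coordinate projection onto an index set. -/
def proj {N : ℕ} (Δ : Finset (Fin N)) (x : Fin N → ℂ) : Fin N → ℂ :=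
  fun i => if i ∈ Δ then x i else 0

/-- The two-sided restricted isometry-in-levels inequality with constant `δ`. -/
def RIPBound {m N : ℕ} (A : Matrix (Fin m) (Fin N) ℂ) (r : ℕ) (M s : ℕ → ℕ) (δ : ℝ) : Prop :=
  ∀ x : Fin N → ℂ, Sparse r M s x →
    (1 - δ) * n2sq x ≤ n2sq (A.mulVec x) ∧ n2sq (A.mulVec x) ≤ (1 + δ) * n2sq x

/-- The restricted isometry constant in levels `δ_{s,M}`: the smallest `δ ≥ 0`
satisfying the RIP-in-levels inequalities. -/
def ricl {m N : ℕ} (A : Matrix (Fin m) (Fin N) ℂ) (r : ℕ) (M s : ℕ → ℕ) : ℝ :=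
  sInf {δ : ℝ | 0 ≤ δ ∧ RIPBound A r M s δ}

/-- Best `(s,M)`-term approximation error in the weighted ℓ¹ norm. -/
def bestApprox {N : ℕ} (r : ℕ) (M s : ℕ → ℕ) (w : Fin N → ℝ) (x : Fin N → ℂ) : ℝ :=
  sInf {t : ℝ | ∃ z : Fin N → ℂ, Sparse r M s z ∧ t = wn1 w (x - z)}

/-- `ζ = ∑ₖ (w^{(k)})² sₖ`. -/
def zeta (r : ℕ) (s : ℕ → ℕ) (wl : ℕ → ℝ) : ℝ :=
  ∑ k ∈ Finset.range r, wl k ^ 2 * (s k : ℝ)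

/-- `ξ = minₖ (w^{(k)})² sₖ`. -/
def xiMin (r : ℕ) (s : ℕ → ℕ) (wl : ℕ → ℝ) : ℝ :=
  if h : (Finset.range r).Nonempty then (Finset.range r).inf' h fun k => wl k ^ 2 * (s k : ℝ)
  else 0

/-- `T` is a set collecting, within each level `k`, (the indices of) `s k`
largest-in-absolute-value entries of `z` (or all of the level if it is smaller). -/
def IsTopSet {N : ℕ} (r : ℕ) (M s : ℕ → ℕ) (z : Fin N → ℂ) (T : Finset (Fin N)) : Prop :=
  (∀ k < r, (T ∩ level N M k).card = min (s k) (level N M k).card) ∧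
  (∀ k < r, ∀ i ∈ T ∩ level N M k, ∀ j ∈ level N M k \ T, ‖z j‖ ≤ ‖z i‖)

/-- `h` is a hard thresholding in levels `H_{s,M}(z)` of `z`. -/
def IsThresh {N : ℕ} (r : ℕ) (M s : ℕ → ℕ) (z h : Fin N → ℂ) : Prop :=
  ∃ T : Finset (Fin N), IsTopSet r M s z T ∧ h = proj T z

/-- `X` is a sequence of IHTL iterates with data `(A, y)` and sparsities `(s, M)`. -/
def IHTLSeq {m N : ℕ} (A : Matrix (Fin m) (Fin N) ℂ) (r : ℕ) (M s : ℕ → ℕ)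
    (y : Fin m → ℂ) (X : ℕ → Fin N → ℂ) : Prop :=
  ∀ n, IsThresh r M s (X n + A.conjTranspose.mulVec (y - A.mulVec (X n))) (X (n + 1))

/-- `X` is a sequence of CoSaMPL iterates with data `(A, y)` and sparsities `(s, M)`. -/
def CoSaMPLSeq {m N : ℕ} (A : Matrix (Fin m) (Fin N) ℂ) (r : ℕ) (M s : ℕ → ℕ)
    (y : Fin m → ℂ) (X : ℕ → Fin N → ℂ) : Prop :=
  ∀ n, ∃ (T : Finset (Fin N)) (u : Fin N → ℂ),
    IsTopSet r M (fun k => 2 * s k) (A.conjTranspose.mulVec (y - A.mulVec (X n))) T ∧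
    supp u ⊆ supp (X n) ∪ T ∧
    (∀ z : Fin N → ℂ, supp z ⊆ supp (X n) ∪ T → n2 (y - A.mulVec u) ≤ n2 (y - A.mulVec z)) ∧
    IsThresh r M s u (X (n + 1))


section Aux
set_option linter.unusedSectionVars false
variable {ι : Type*} [DecidableEq ι]

lemma sqrt_sum_sq_le_sum {s : Finset ι} {a : ι → ℝ} (ha : ∀ i ∈ s, 0 ≤ a i) :
    Real.sqrt (∑ i ∈ s, a i ^ 2) ≤ ∑ i ∈ s, a i := by
  have h1 : ∑ i ∈ s, a i ^ 2 ≤ (∑ i ∈ s, a i) ^ 2 := by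
    rw [sq]
    rw [Finset.mul_sum]
    refine Finset.sum_le_sum fun i hi => ?_
    rw [sq]
    exact mul_le_mul_of_nonneg_right (Finset.single_le_sum ha hi) (ha i hi)
  calc Real.sqrt (∑ i ∈ s, a i ^ 2) ≤ Real.sqrt ((∑ i ∈ s, a i)^2) := Real.sqrt_le_sqrt h1
    _ = ∑ i ∈ s, a i := Real.sqrt_sq (Finset.sum_nonneg ha)

lemma exists_top (f : ι → ℝ) (n : ℕ) (S : Finset ι) :
    ∃ C, C ⊆ S ∧ C.card = min n S.card ∧ ∀ i ∈ C, ∀ j ∈ S \ C, f j ≤ f i := by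
  induction n with
  | zero => exact ⟨∅, Finset.empty_subset _, by simp, by simp⟩
  | succ n ih =>
    obtain ⟨C, hCS, hcard, htop⟩ := ih
    by_cases hle : S.card ≤ n
    · refine ⟨C, hCS, ?_, htop⟩
      rw [hcard, min_eq_right hle, min_eq_right (hle.trans n.le_succ)]
    · push_neg at hle
      have hcard' : C.card = n := by rw [hcard, min_eq_left hle.le]
      have hne : (S \ C).Nonempty := by
        rw [← Finset.card_pos, Finset.card_sdiff_of_subset hCS, hcard']
        omega
      obtain ⟨m, hmS, hmax⟩ := Finset.exists_max_image (S \ C) f hne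
      have hmC : m ∉ C := (Finset.mem_sdiff.mp hmS).2
      refine ⟨insert m C, Finset.insert_subset (Finset.mem_sdiff.mp hmS).1 hCS, ?_, ?_⟩
      · rw [Finset.card_insert_of_notMem hmC, hcard', min_eq_left (by omega)]
      · intro i hi j hj
        have hj' : j ∈ S \ C := Finset.sdiff_subset_sdiff le_rfl (Finset.subset_insert _ _) hj
        rcases Finset.mem_insert.mp hi with rfl | hi
        · exact hmax j hj'
        · exact htop i hi j hj'

lemma sum_le_sum_of_card_le {f : ι → ℝ} {P Q : Finset ι} (h : P.card ≤ Q.card)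
    (hf : ∀ j ∈ P, ∀ i ∈ Q, f j ≤ f i) (h0 : ∀ i ∈ Q, 0 ≤ f i) (h0' : ∀ i ∈ P, 0 ≤ f i) :
    ∑ j ∈ P, f j ≤ ∑ i ∈ Q, f i := by
  rcases P.eq_empty_or_nonempty with rfl | hP
  · simpa using Finset.sum_nonneg h0
  · have hQ : Q.Nonempty := Finset.card_pos.mp (lt_of_lt_of_le (Finset.card_pos.mpr hP) h)
    have hinf : ∀ j ∈ P, f j ≤ Q.inf' hQ f := fun j hj =>
      Finset.le_inf' hQ f fun i hi => hf j hj i hi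
    calc ∑ j ∈ P, f j ≤ ∑ _j ∈ P, Q.inf' hQ f := Finset.sum_le_sum hinf
      _ = P.card • Q.inf' hQ f := by rw [Finset.sum_const]
      _ ≤ Q.card • Q.inf' hQ f := by
          have : (0:ℝ) ≤ Q.inf' hQ f := by
            obtain ⟨i, hi, hfi⟩ := Finset.exists_mem_eq_inf' hQ f
            rw [hfi]; exact h0 i hi
          exact nsmul_le_nsmul_left this h
      _ ≤ ∑ i ∈ Q, f i := Finset.card_nsmul_le_sum Q f _ fun i hi => Finset.inf'_le f hi

def topOf (f : ι → ℝ) (n : ℕ) (S : Finset ι) : Finset ι := (exists_top f n S).choose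

lemma topOf_subset (f : ι → ℝ) (n : ℕ) (S : Finset ι) : topOf f n S ⊆ S :=
  (exists_top f n S).choose_spec.1

lemma card_topOf (f : ι → ℝ) (n : ℕ) (S : Finset ι) : (topOf f n S).card = min n S.card :=
  (exists_top f n S).choose_spec.2.1

lemma topOf_spec (f : ι → ℝ) (n : ℕ) (S : Finset ι) :
    ∀ i ∈ topOf f n S, ∀ j ∈ S \ topOf f n S, f j ≤ f i :=
  (exists_top f n S).choose_spec.2.2

def tailR (f : ι → ℝ) (n : ℕ) (S : Finset ι) : ℕ → Finset ι
  | 0 => S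
  | j+1 => tailR f n S j \ topOf f n (tailR f n S j)

lemma tailR_succ (f : ι → ℝ) (n : ℕ) (S : Finset ι) (j : ℕ) :
    tailR f n S (j+1) = tailR f n S j \ topOf f n (tailR f n S j) := rfl

lemma tailR_subset_succ (f : ι → ℝ) (n : ℕ) (S : Finset ι) (j : ℕ) :
    tailR f n S (j+1) ⊆ tailR f n S j := Finset.sdiff_subset

lemma tailR_mono (f : ι → ℝ) (n : ℕ) (S : Finset ι) {a b : ℕ} (h : a ≤ b) :
    tailR f n S b ⊆ tailR f n S a := by
  induction b with
  | zero => simp_all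
  | succ b ih =>
    rcases Nat.lt_or_ge a (b+1) with h' | h'
    · exact (tailR_subset_succ f n S b).trans (ih (by omega))
    · have : a = b + 1 := le_antisymm h h'
      subst this; exact subset_rfl

lemma tailR_subset (f : ι → ℝ) (n : ℕ) (S : Finset ι) (j : ℕ) :
    tailR f n S j ⊆ S := tailR_mono f n S (Nat.zero_le j)

lemma card_tailR_succ (f : ι → ℝ) (n : ℕ) (S : Finset ι) (j : ℕ) :
    (tailR f n S (j+1)).card = (tailR f n S j).card - min n (tailR f n S j).card := by
  rw [tailR_succ, Finset.card_sdiff_of_subset (topOf_subset _ _ _), card_topOf]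

lemma tailR_eventually_empty (f : ι → ℝ) (n : ℕ) (hn : 1 ≤ n) (S : Finset ι) {j : ℕ}
    (hj : S.card ≤ j) : tailR f n S j = ∅ := by
  have key : ∀ j, (tailR f n S j).card + j ≤ S.card ∨ tailR f n S j = ∅ := by
    intro j
    induction j with
    | zero => left; simp [tailR]
    | succ j ih =>
      rcases ih with h | h
      · rcases Finset.eq_empty_or_nonempty (tailR f n S j) with he | hne
        · right; rw [tailR_succ, he]; simp
        · left
          have h1 : 1 ≤ (tailR f n S j).card := Finset.card_pos.mpr hne
          have h2 := card_tailR_succ f n S j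
          omega
      · right; rw [tailR_succ, h]; simp
  rcases key j with h | h
  · have : (tailR f n S j).card = 0 := by omega
    exact Finset.card_eq_zero.mp this
  · exact h

lemma tailR_union (f : ι → ℝ) (n : ℕ) (S : Finset ι) (J : ℕ) :
    S = tailR f n S J ∪ (Finset.range J).biUnion (fun j => topOf f n (tailR f n S j)) := by
  induction J with
  | zero => simp [tailR]
  | succ J ih =>
    rw [Finset.range_add_one, Finset.biUnion_insert]
    conv_lhs => rw [ih]
    rw [tailR_succ]
    have hsub := topOf_subset f n (tailR f n S J)
    ext i
    simp only [Finset.mem_union, Finset.mem_sdiff]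
    constructor
    · rintro (h | h)
      · by_cases hi : i ∈ topOf f n (tailR f n S J) <;> tauto
      · tauto
    · rintro (⟨h, _⟩ | (h | h))
      · tauto
      · exact Or.inl (hsub h)
      · tauto

lemma block_sq_bound (f : ι → ℝ) (hf : ∀ i, 0 ≤ f i) (E Bot : Finset ι) (sk : ℕ) (hsk : 1 ≤ sk)
    (hE : E.card ≤ sk) (hBotcard : E.Nonempty → Bot.card = sk)
    (hdom : ∀ p ∈ E, ∀ q ∈ Bot, f p ≤ f q) :
    ∑ i ∈ E, f i ^ 2 ≤ (∑ i ∈ Bot, f i) ^ 2 / sk := by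
  have hskR : (0:ℝ) < sk := by exact_mod_cast hsk
  rcases E.eq_empty_or_nonempty with rfl | hne
  · simp only [Finset.sum_empty]
    positivity
  · have hBot : Bot.Nonempty := by
      rw [← Finset.card_pos, hBotcard hne]; omega
    set m := Bot.inf' hBot f with hm
    have hm0 : 0 ≤ m := by
      obtain ⟨i, hi, hfi⟩ := Finset.exists_mem_eq_inf' hBot f
      rw [hm, hfi]; exact hf i
    have hpm : ∀ p ∈ E, f p ≤ m := fun p hp => Finset.le_inf' hBot f fun q hq => hdom p hp q hq
    have h1 : ∑ i ∈ E, f i ^ 2 ≤ sk * m ^ 2 := by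
      calc ∑ i ∈ E, f i ^ 2 ≤ ∑ _i ∈ E, m ^ 2 :=
            Finset.sum_le_sum fun i hi => by
              have := hpm i hi
              nlinarith [hf i]
        _ = E.card * m ^ 2 := by rw [Finset.sum_const, nsmul_eq_mul]
        _ ≤ sk * m ^ 2 := by
            apply mul_le_mul_of_nonneg_right _ (sq_nonneg m)
            exact_mod_cast hE
    have h2 : sk * m ≤ ∑ i ∈ Bot, f i := by
      have := Finset.card_nsmul_le_sum Bot f m (fun i hi => Finset.inf'_le f hi)
      rw [hBotcard hne] at this
      simpa [nsmul_eq_mul] using this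
    have h2' : (0:ℝ) ≤ ↑sk * m := by positivity
    have h3 : (↑sk*m)*(↑sk*m) ≤ (∑ i ∈ Bot, f i)*(∑ i ∈ Bot, f i) :=
      mul_le_mul h2 h2 h2' (h2'.trans h2)
    rw [le_div_iff₀ hskR]
    nlinarith


lemma level_sq_bound (f : ι → ℝ) (hf : ∀ i, 0 ≤ f i) (E Bot D : Finset ι) (sk : ℕ)
    (hsk : 1 ≤ sk) (hBotcard : E.Nonempty → Bot.card = sk)
    (hdom : ∀ p ∈ E, ∀ q ∈ Bot, f p ≤ f q) (hED : E ⊆ D) (hBotD : Bot ⊆ D) :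
    ∑ i ∈ E, f i ^ 2 ≤ (∑ i ∈ D, f i) ^ 2 / sk := by
  have hskR : (0:ℝ) < sk := by exact_mod_cast hsk
  rcases E.eq_empty_or_nonempty with rfl | hne
  · simp only [Finset.sum_empty]
    positivity
  · have hBot : Bot.Nonempty := by
      rw [← Finset.card_pos, hBotcard hne]; omega
    set m := Bot.inf' hBot f with hm
    have hm0 : 0 ≤ m := by
      obtain ⟨i, hi, hfi⟩ := Finset.exists_mem_eq_inf' hBot f
      rw [hm, hfi]; exact hf i
    have hpm : ∀ p ∈ E, f p ≤ m := fun p hp => Finset.le_inf' hBot f fun q hq => hdom p hp q hq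
    have hDnn : (0:ℝ) ≤ ∑ i ∈ D, f i := Finset.sum_nonneg fun i _ => hf i
    have h1 : ∑ i ∈ E, f i ^ 2 ≤ m * ∑ i ∈ E, f i := by
      rw [Finset.mul_sum]
      refine Finset.sum_le_sum fun i hi => ?_
      have := hpm i hi
      nlinarith [hf i]
    have h2 : ∑ i ∈ E, f i ≤ ∑ i ∈ D, f i :=
      Finset.sum_le_sum_of_subset_of_nonneg hED fun i _ _ => hf i
    have h3 : (sk:ℝ) * m ≤ ∑ i ∈ D, f i := by
      have hb := Finset.card_nsmul_le_sum Bot f m (fun i hi => Finset.inf'_le f hi)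
      rw [hBotcard hne] at hb
      have hb' : (sk:ℝ) * m ≤ ∑ i ∈ Bot, f i := by simpa [nsmul_eq_mul] using hb
      exact hb'.trans (Finset.sum_le_sum_of_subset_of_nonneg hBotD fun i _ _ => hf i)
    have hEnn : (0:ℝ) ≤ ∑ i ∈ E, f i := Finset.sum_nonneg fun i _ => hf i
    rw [le_div_iff₀ hskR]
    calc (∑ i ∈ E, f i ^ 2) * sk ≤ (m * ∑ i ∈ D, f i) * sk := by
          apply mul_le_mul_of_nonneg_right _ hskR.le
          exact h1.trans (mul_le_mul_of_nonneg_left h2 hm0)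
      _ = ((sk:ℝ) * m) * ∑ i ∈ D, f i := by ring
      _ ≤ (∑ i ∈ D, f i) * ∑ i ∈ D, f i := mul_le_mul_of_nonneg_right h3 hDnn
      _ = (∑ i ∈ D, f i) ^ 2 := by ring

lemma sum_inter_le_top (f : ι → ℝ) (hf : ∀ i, 0 ≤ f i) (L C Z : Finset ι) (hCL : C ⊆ L)
    (htop : ∀ i ∈ C, ∀ j ∈ L \ C, f j ≤ f i) (hZL : Z ⊆ L) (hcard : Z.card ≤ C.card) :
    ∑ i ∈ Z, f i ≤ ∑ i ∈ C, f i := by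
  have hsplitZ : ∑ i ∈ Z, f i = ∑ i ∈ Z ∩ C, f i + ∑ i ∈ Z \ C, f i := by
    rw [← Finset.sum_inter_add_sum_sdiff Z C f]
  have hsplitC : ∑ i ∈ C, f i = ∑ i ∈ C ∩ Z, f i + ∑ i ∈ C \ Z, f i := by
    rw [← Finset.sum_inter_add_sum_sdiff C Z f]
  have hcard2 : (Z \ C).card ≤ (C \ Z).card := by
    have h1 := Finset.card_inter_add_card_sdiff Z C
    have h2 := Finset.card_inter_add_card_sdiff C Z
    have h3 : (Z ∩ C).card = (C ∩ Z).card := by rw [Finset.inter_comm]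
    omega
  have hkey : ∑ i ∈ Z \ C, f i ≤ ∑ i ∈ C \ Z, f i := by
    apply sum_le_sum_of_card_le hcard2
    · intro j hj i hi
      exact htop i (Finset.mem_sdiff.mp hi).1 j
        (Finset.mem_sdiff.mpr ⟨hZL (Finset.mem_sdiff.mp hj).1, (Finset.mem_sdiff.mp hj).2⟩)
    · exact fun i _ => hf i
    · exact fun i _ => hf i
  rw [hsplitZ, hsplitC, Finset.inter_comm]
  linarith

end Aux

section N2
variable {ι : Type*} [Fintype ι]

lemma n2sq_nonneg' (x : ι → ℂ) : 0 ≤ n2sq x := Finset.sum_nonneg fun i _ => sq_nonneg _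

lemma n2_nonneg' (x : ι → ℂ) : 0 ≤ n2 x := Real.sqrt_nonneg _

lemma n2_eq_norm (x : ι → ℂ) : n2 x = ‖(WithLp.linearEquiv 2 ℂ (ι → ℂ)).symm x‖ := by
  rw [EuclideanSpace.norm_eq]
  rfl

lemma n2_add_le (x y : ι → ℂ) : n2 (x + y) ≤ n2 x + n2 y := by
  simp only [n2_eq_norm, map_add]
  exact norm_add_le _ _

lemma n2_sum_le {α : Type*} (s : Finset α) (g : α → ι → ℂ) :
    n2 (∑ j ∈ s, g j) ≤ ∑ j ∈ s, n2 (g j) := by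
  simp only [n2_eq_norm, map_sum]
  exact norm_sum_le _ _

lemma n2_mono {x y : ι → ℂ} (h : n2sq x ≤ n2sq y) : n2 x ≤ n2 y := Real.sqrt_le_sqrt h

end N2

section Levels
variable {N r : ℕ} {M : ℕ → ℕ}

lemma M_mono (hM : LevelsOK N r M) {a b : ℕ} (hab : a ≤ b) (hb : b ≤ r) : M a ≤ M b := by
  induction b with
  | zero =>
    have ha : a = 0 := by omega
    subst ha; exact le_rfl
  | succ b ih =>
    rcases Nat.lt_or_ge a (b+1) with h' | h'
    · have h1 : M a ≤ M b := ih (by omega) (by omega)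
      have h2 : M b < M (b+1) := hM.2.2 b (by omega)
      omega
    · have : a = b + 1 := by omega
      subst this; exact le_rfl

lemma level_disjoint (hM : LevelsOK N r M) {k k' : ℕ} (hk : k < r) (hk' : k' < r)
    (hne : k ≠ k') : Disjoint (level N M k) (level N M k') := by
  rw [Finset.disjoint_left]
  intro i hi hi'
  simp only [level, Finset.mem_filter, Finset.mem_univ, true_and] at hi hi'
  rcases Nat.lt_or_ge k k' with h | h
  · have : M (k+1) ≤ M k' := M_mono hM h (by omega)
    omega
  · have hkk : k' < k := by omega
    have : M (k'+1) ≤ M k := M_mono hM hkk (by omega)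
    omega

lemma exists_level (hM : LevelsOK N r M) (hr : 0 < r) (i : Fin N) :
    ∃ k < r, i ∈ level N M k := by
  have hP : ∃ k, (i:ℕ) < M (k+1) := by
    refine ⟨r - 1, ?_⟩
    rw [Nat.sub_add_cancel hr, hM.2.1]
    exact i.isLt
  classical
  set k₀ := Nat.find hP with hk₀
  have hspec : (i:ℕ) < M (k₀+1) := Nat.find_spec hP
  have hk₀le : k₀ ≤ r - 1 := Nat.find_min' hP (by rw [Nat.sub_add_cancel hr, hM.2.1]; exact i.isLt)
  refine ⟨k₀, by omega, ?_⟩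
  simp only [level, Finset.mem_filter, Finset.mem_univ, true_and]
  refine ⟨?_, hspec⟩
  rcases Nat.eq_zero_or_pos k₀ with h0 | h0
  · rw [h0, hM.1]; omega
  · have := Nat.find_min hP (m := k₀ - 1) (by omega)
    have heq : k₀ - 1 + 1 = k₀ := by omega
    rw [heq] at this
    omega

lemma univ_eq_biUnion_level (hM : LevelsOK N r M) (hr : 0 < r) :
    (Finset.univ : Finset (Fin N)) = (Finset.range r).biUnion (level N M) := by
  ext i
  simp only [Finset.mem_univ, Finset.mem_biUnion, Finset.mem_range, true_iff]
  obtain ⟨k, hk, hik⟩ := exists_level hM hr i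
  exact ⟨k, hk, hik⟩

lemma level_subset_iff {k : ℕ} {i : Fin N} :
    i ∈ level N M k ↔ M k ≤ (i:ℕ) ∧ (i:ℕ) < M (k+1) := by
  simp [level]

end Levels

section Proj
variable {N : ℕ}

lemma proj_biUnion {α : Type*} (F : Finset α) (S : α → Finset (Fin N)) (x : Fin N → ℂ)
    (hdisj : ∀ a ∈ F, ∀ b ∈ F, a ≠ b → Disjoint (S a) (S b)) :
    proj (F.biUnion S) x = ∑ j ∈ F, proj (S j) x := by
  funext i
  rw [Finset.sum_apply]
  simp only [proj]
  by_cases h : i ∈ F.biUnion S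
  · obtain ⟨j₀, hj₀F, hj₀⟩ := Finset.mem_biUnion.mp h
    rw [if_pos h, Finset.sum_eq_single j₀]
    · rw [if_pos hj₀]
    · intro b hb hbne
      rw [if_neg]
      intro hib
      exact (Finset.disjoint_left.mp (hdisj b hb j₀ hj₀F hbne) hib) hj₀
    · intro habs; exact absurd hj₀F habs
  · rw [if_neg h]
    refine (Finset.sum_eq_zero fun j hj => ?_).symm
    rw [if_neg]
    intro hij
    exact h (Finset.mem_biUnion.mpr ⟨j, hj, hij⟩)

lemma n2sq_proj (S : Finset (Fin N)) (x : Fin N → ℂ) :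
    n2sq (proj S x) = ∑ i ∈ S, ‖x i‖ ^ 2 := by
  rw [n2sq]
  rw [← Finset.sum_filter_add_sum_filter_not Finset.univ (fun i => i ∈ S)]
  have h1 : ∀ i ∈ Finset.univ.filter (fun i => i ∈ S), ‖proj S x i‖ ^ 2 = ‖x i‖ ^ 2 := by
    intro i hi
    simp only [Finset.mem_filter] at hi
    simp [proj, hi.2]
  have h2 : ∀ i ∈ Finset.univ.filter (fun i => ¬ i ∈ S), ‖proj S x i‖ ^ 2 = 0 := by
    intro i hi
    simp only [Finset.mem_filter] at hi
    simp [proj, hi.2]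
  rw [Finset.sum_congr rfl h1, Finset.sum_congr rfl h2, Finset.sum_const_zero, add_zero]
  congr 1
  ext i
  simp

lemma supp_proj_subset (S : Finset (Fin N)) (x : Fin N → ℂ) : supp (proj S x) ⊆ S := by
  intro i hi
  simp only [supp, Finset.mem_filter, Finset.mem_univ, true_and] at hi
  by_contra h
  exact hi (by simp [proj, h])

end Proj

set_option maxHeartbeats 3000000 in
/-- weighted approximation theorem, ℓ² bound: if `x'` is `(κs,M)`-sparse and
`‖P_Ξ x − x'‖₂ ≤ τ‖A P_{Ξᶜ} x + e‖₂ + λ` with `Ξ` the per-level top-`2s` set of `x`,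
then `‖x − x'‖₂ ≤ (F_τ/√ξ) σ_{s,M}(x)_{ℓ¹_w} + τ‖e‖₂ + λ` with `F_τ = 1 + √2 τ`. -/
theorem stmt7 {m N : ℕ} (r : ℕ) (M s : ℕ → ℕ) (hM : LevelsOK N r M) (hr : 0 < r)
    (hs : ∀ k < r, 1 ≤ s k)
    (w : Fin N → ℝ) (wl : ℕ → ℝ) (hwpos : ∀ k < r, 0 < wl k)
    (hw : ∀ k < r, ∀ i ∈ level N M k, w i = wl k)
    (A : Matrix (Fin m) (Fin N) ℂ) (hA : ricl A r M s < 1)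
    (κ : ℕ) (hκ : 0 < κ) (τ lam : ℝ) (hτ : 0 < τ) (hlam : 0 ≤ lam)
    (x x' : Fin N → ℂ) (e : Fin m → ℂ)
    (hx' : Sparse r M (fun k => κ * s k) x')
    (Ξ : Finset (Fin N)) (hΞ : IsTopSet r M (fun k => 2 * s k) x Ξ)
    (hnear : n2 (proj Ξ x - x') ≤
      τ * n2 (A.mulVec (proj (Finset.univ \ Ξ) x) + e) + lam) :
    n2 (x - x') ≤
      (1 + Real.sqrt 2 * τ) / Real.sqrt (xiMin r s wl) * bestApprox r M s w x +
        τ * n2 e + lam := by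
  classical
  obtain ⟨hM0, hMr, hMlt⟩ := id hM
  set f : Fin N → ℝ := fun i => ‖x i‖ with hfdef
  have hf : ∀ i, 0 ≤ f i := fun i => norm_nonneg _
  set Lv : ℕ → Finset (Fin N) := level N M with hLvdef
  set C : ℕ → Finset (Fin N) := fun k => topOf f (s k) (Ξ ∩ Lv k) with hCdef
  set R : ℕ → ℕ → Finset (Fin N) := fun k => tailR f (s k) (Lv k \ Ξ) with hRdef
  set B : ℕ → ℕ → Finset (Fin N) :=
    fun k j => Nat.casesOn j ((Ξ ∩ Lv k) \ C k) (fun j' => topOf f (s k) (R k j')) with hBdef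
  set D : ℕ → Finset (Fin N) := fun k => Lv k \ C k with hDdef
  set t : ℕ → ℝ := fun k => ∑ i ∈ D k, f i with htdef
  set u : ℕ → ℕ → ℝ := fun k j => ∑ i ∈ B k j, f i with hudef
  set K : ℝ := ∑ k ∈ Finset.range r, wl k * t k with hKdef
  set ξ : ℝ := xiMin r s wl with hξdef
  set Z : ℕ → Finset (Fin N) := fun j => (Finset.range r).biUnion fun k => B k (j+1) with hZdef
  have hB0 : ∀ k, B k 0 = (Ξ ∩ Lv k) \ C k := fun k => rfl
  have hBs : ∀ k j, B k (j+1) = topOf f (s k) (R k j) := fun k j => rfl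
  have hR0 : ∀ k, R k 0 = Lv k \ Ξ := fun k => rfl
  have hRs : ∀ k j, R k (j+1) = R k j \ B k (j+1) := fun k j => tailR_succ f (s k) (Lv k \ Ξ) j
  -- basic subset facts
  have hCsub : ∀ k, C k ⊆ Ξ ∩ Lv k := fun k => topOf_subset _ _ _
  have hCLv : ∀ k, C k ⊆ Lv k := fun k => (hCsub k).trans Finset.inter_subset_right
  have hCΞ : ∀ k, C k ⊆ Ξ := fun k => (hCsub k).trans Finset.inter_subset_left
  have hB1sub : ∀ k j, B k (j+1) ⊆ Lv k \ Ξ := by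
    intro k j
    rw [hBs]
    exact (topOf_subset _ _ _).trans (tailR_subset _ _ _ _)
  have hBsubLv : ∀ k j, B k j ⊆ Lv k := by
    intro k j
    cases j with
    | zero =>
      rw [hB0]
      exact Finset.sdiff_subset.trans Finset.inter_subset_right
    | succ j => exact (hB1sub k j).trans Finset.sdiff_subset
  have hBsubD : ∀ k j, B k j ⊆ D k := by
    intro k j
    cases j with
    | zero =>
      rw [hB0]
      exact Finset.sdiff_subset_sdiff Finset.inter_subset_right (Finset.Subset.refl _)
    | succ j => exact (hB1sub k j).trans (Finset.sdiff_subset_sdiff (Finset.Subset.refl _) (hCΞ k))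
  -- cardinalities
  have hCcard : ∀ k < r, (C k).card = min (s k) (Lv k).card := by
    intro k hk
    have h1 : (Ξ ∩ Lv k).card = min (2 * s k) (Lv k).card := hΞ.1 k hk
    have h2 : (C k).card = min (s k) (Ξ ∩ Lv k).card := card_topOf _ _ _
    rw [h2, h1]
    omega
  have hBcard : ∀ k j, (B k (j+1)).card = min (s k) (R k j).card := by
    intro k j
    rw [hBs]
    exact card_topOf _ _ _
  have hB0card : ∀ k < r, (Lv k \ Ξ).Nonempty → (B k 0).card = s k := by
    intro k hk hne
    have h1 : (Ξ ∩ Lv k).card = min (2 * s k) (Lv k).card := hΞ.1 k hk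
    have h2 := Finset.card_sdiff_add_card_inter (Lv k) Ξ
    have h2' : (Lv k ∩ Ξ).card = (Ξ ∩ Lv k).card := by rw [Finset.inter_comm]
    have h3 : 0 < (Lv k \ Ξ).card := Finset.card_pos.mpr hne
    have h4 : (B k 0).card = (Ξ ∩ Lv k).card - (C k).card := by
      rw [hB0]
      exact Finset.card_sdiff_of_subset (hCsub k)
    have h5 := hCcard k hk
    have h6 := hs k hk
    have h7 : (C k).card ≤ (Ξ ∩ Lv k).card := Finset.card_le_card (hCsub k)
    omega
  have hfull : ∀ k < r, ∀ j, (B k (j+1)).Nonempty → (B k j).card = s k := by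
    intro k hk j hne
    have hRne : (R k j).Nonempty := by
      obtain ⟨i, hi⟩ := hne
      rw [hBs] at hi
      exact ⟨i, topOf_subset _ _ _ hi⟩
    cases j with
    | zero =>
      apply hB0card k hk
      rwa [hR0] at hRne
    | succ j =>
      have h2 : (R k (j+1)).card = (R k j).card - min (s k) (R k j).card :=
        card_tailR_succ f (s k) (Lv k \ Ξ) j
      have h3 : 0 < (R k (j+1)).card := Finset.card_pos.mpr hRne
      rw [hBcard k j]
      omega
  have hBdisj : ∀ k, ∀ a b : ℕ, a < b → Disjoint (B k a) (B k b) := by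
    intro k a b hab
    obtain ⟨b', rfl⟩ : ∃ b', b = b' + 1 := ⟨b - 1, by omega⟩
    cases a with
    | zero =>
      refine Finset.disjoint_left.mpr fun i hi hib => ?_
      rw [hB0] at hi
      have h1 : i ∈ Ξ := (Finset.mem_inter.mp (Finset.mem_sdiff.mp hi).1).1
      exact (Finset.mem_sdiff.mp (hB1sub k b' hib)).2 h1
    | succ a =>
      refine Finset.disjoint_left.mpr fun i hi hib => ?_
      rw [hBs] at hib
      have h1 : i ∈ R k b' := topOf_subset _ _ _ hib
      have h2 : i ∈ R k (a+1) := tailR_mono f (s k) (Lv k \ Ξ) (by omega : a + 1 ≤ b') h1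
      rw [hRs] at h2
      exact (Finset.mem_sdiff.mp h2).2 hi
  have hdomB : ∀ k < r, ∀ j, ∀ p ∈ B k (j+1), ∀ q ∈ B k j, f p ≤ f q := by
    intro k hk j p hp q hq
    cases j with
    | zero =>
      rw [hB0] at hq
      exact hΞ.2 k hk q (Finset.mem_sdiff.mp hq).1 p (hB1sub k 0 hp)
    | succ j =>
      rw [hBs] at hp hq
      have h1 : p ∈ R k (j+1) := topOf_subset _ _ _ hp
      rw [hRs, hBs] at h1
      exact topOf_spec f (s k) (R k j) q hq p h1
  have hCtop : ∀ k < r, ∀ i ∈ C k, ∀ j ∈ Lv k \ C k, f j ≤ f i := by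
    intro k hk i hi j hj
    rcases Finset.mem_sdiff.mp hj with ⟨hjL, hjC⟩
    by_cases hjΞ : j ∈ Ξ
    · exact topOf_spec f (s k) (Ξ ∩ Lv k) i hi j
        (Finset.mem_sdiff.mpr ⟨Finset.mem_inter.mpr ⟨hjΞ, hjL⟩, hjC⟩)
    · exact hΞ.2 k hk i (hCsub k hi) j (Finset.mem_sdiff.mpr ⟨hjL, hjΞ⟩)
  have hcoverTail : ∀ k < r, Lv k \ Ξ = (Finset.range N).biUnion fun j => B k (j+1) := by
    intro k hk
    have hcard : (Lv k \ Ξ).card ≤ N := by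
      calc (Lv k \ Ξ).card ≤ (Finset.univ : Finset (Fin N)).card := Finset.card_le_univ _
        _ = N := by simp
    have hemp : tailR f (s k) (Lv k \ Ξ) N = ∅ :=
      tailR_eventually_empty f (s k) (hs k hk) (Lv k \ Ξ) hcard
    have h1 := tailR_union f (s k) (Lv k \ Ξ) N
    rw [hemp, Finset.empty_union] at h1
    exact h1
  -- pairwise disjointness families
  have hLvPD : (↑(Finset.range r) : Set ℕ).PairwiseDisjoint Lv := by
    intro a ha b hb hab
    exact level_disjoint hM (Finset.mem_range.mp ha) (Finset.mem_range.mp hb) hab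
  have hLvΞPD : (↑(Finset.range r) : Set ℕ).PairwiseDisjoint (fun k => Lv k \ Ξ) := by
    intro a ha b hb hab
    show Disjoint (Lv a \ Ξ) (Lv b \ Ξ)
    exact (hLvPD ha hb hab).mono Finset.sdiff_subset Finset.sdiff_subset
  have hBPD : ∀ j, (↑(Finset.range r) : Set ℕ).PairwiseDisjoint (fun k => B k (j+1)) := by
    intro j a ha b hb hab
    show Disjoint (B a (j+1)) (B b (j+1))
    exact Finset.disjoint_of_subset_left (hBsubLv a (j+1))
      (Finset.disjoint_of_subset_right (hBsubLv b (j+1)) (hLvPD ha hb hab))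
  have hBjPD : ∀ k, (↑(Finset.range N) : Set ℕ).PairwiseDisjoint (B k) := by
    intro k a _ b _ hab
    rcases hab.lt_or_gt with h | h
    · exact hBdisj k a b h
    · exact (hBdisj k b a h).symm
  have hsum_univ : ∀ g : Fin N → ℝ,
      ∑ i, g i = ∑ k ∈ Finset.range r, ∑ i ∈ Lv k, g i := by
    intro g
    calc ∑ i, g i = ∑ i ∈ (Finset.range r).biUnion Lv, g i := by
          rw [← univ_eq_biUnion_level hM hr]
      _ = ∑ k ∈ Finset.range r, ∑ i ∈ Lv k, g i := Finset.sum_biUnion hLvPD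
  have hsetΞ : Finset.univ \ Ξ = (Finset.range r).biUnion fun k => Lv k \ Ξ := by
    ext i
    simp only [Finset.mem_sdiff, Finset.mem_univ, true_and, Finset.mem_biUnion, Finset.mem_range]
    constructor
    · intro hi
      obtain ⟨k, hk, hik⟩ := exists_level hM hr i
      exact ⟨k, hk, hik, hi⟩
    · rintro ⟨k, _, _, hik⟩
      exact hik
  -- ξ facts
  have hrne : (Finset.range r).Nonempty := ⟨0, Finset.mem_range.mpr hr⟩
  have hξpos : 0 < ξ := by
    rw [hξdef, xiMin, dif_pos hrne]
    obtain ⟨k, hk, hkeq⟩ := Finset.exists_mem_eq_inf' hrne fun k => wl k ^ 2 * (s k : ℝ)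
    rw [hkeq]
    have h1 := hwpos k (Finset.mem_range.mp hk)
    have h2 : (0:ℝ) < (s k : ℝ) := by
      have := hs k (Finset.mem_range.mp hk)
      exact_mod_cast Nat.lt_of_lt_of_le Nat.zero_lt_one this
    positivity
  have hξle : ∀ k < r, ξ ≤ wl k ^ 2 * (s k : ℝ) := by
    intro k hk
    rw [hξdef, xiMin, dif_pos hrne]
    exact Finset.inf'_le _ (Finset.mem_range.mpr hk)
  have hsqrtξ : 0 < Real.sqrt ξ := Real.sqrt_pos.mpr hξpos
  have htnn : ∀ k, 0 ≤ t k := fun k => Finset.sum_nonneg fun i _ => hf i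
  have hunn : ∀ k j, 0 ≤ u k j := fun k j => Finset.sum_nonneg fun i _ => hf i
  have hKnn : 0 ≤ K := by
    rw [hKdef]
    exact Finset.sum_nonneg fun k hk =>
      mul_nonneg (hwpos k (Finset.mem_range.mp hk)).le (htnn k)
  -- RIP with constant < 1
  have hCS : ∀ v : Fin N → ℂ,
      n2sq (A.mulVec v) ≤ (∑ p, ∑ q, ‖A p q‖ ^ 2) * n2sq v := by
    intro v
    have hterm : ∀ p, ‖A.mulVec v p‖ ^ 2 ≤ (∑ q, ‖A p q‖ ^ 2) * n2sq v := by
      intro p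
      have h1 : ‖A.mulVec v p‖ ≤ ∑ q, ‖A p q‖ * ‖v q‖ := by
        calc ‖A.mulVec v p‖ = ‖∑ q, A p q * v q‖ := by
              simp [Matrix.mulVec, dotProduct]
          _ ≤ ∑ q, ‖A p q * v q‖ := norm_sum_le _ _
          _ = ∑ q, ‖A p q‖ * ‖v q‖ := by simp [norm_mul]
      have h2 : (∑ q, ‖A p q‖ * ‖v q‖) ^ 2 ≤ (∑ q, ‖A p q‖ ^ 2) * (∑ q, ‖v q‖ ^ 2) :=
        Finset.sum_mul_sq_le_sq_mul_sq _ _ _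
      calc ‖A.mulVec v p‖ ^ 2 ≤ (∑ q, ‖A p q‖ * ‖v q‖) ^ 2 :=
            pow_le_pow_left₀ (norm_nonneg _) h1 2
        _ ≤ (∑ q, ‖A p q‖ ^ 2) * (∑ q, ‖v q‖ ^ 2) := h2
        _ = (∑ q, ‖A p q‖ ^ 2) * n2sq v := rfl
    calc n2sq (A.mulVec v) = ∑ p, ‖A.mulVec v p‖ ^ 2 := rfl
      _ ≤ ∑ p, (∑ q, ‖A p q‖ ^ 2) * n2sq v := Finset.sum_le_sum fun p _ => hterm p
      _ = (∑ p, ∑ q, ‖A p q‖ ^ 2) * n2sq v := by rw [← Finset.sum_mul]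
  have hA2 : ∀ z : Fin N → ℂ, Sparse r M s z →
      n2 (A.mulVec z) ≤ Real.sqrt 2 * n2 z := by
    have hAnn : (0:ℝ) ≤ ∑ p, ∑ q, ‖A p q‖ ^ 2 := by positivity
    have hmem : (1 + ∑ p, ∑ q, ‖A p q‖ ^ 2) ∈ {δ : ℝ | 0 ≤ δ ∧ RIPBound A r M s δ} := by
      refine ⟨by positivity, fun v _ => ?_⟩
      have h1 := hCS v
      have h2 := n2sq_nonneg' v
      have h3 := n2sq_nonneg' (A.mulVec v)
      constructor
      · nlinarith
      · nlinarith
    have hlt : sInf {δ : ℝ | 0 ≤ δ ∧ RIPBound A r M s δ} < 1 := hA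
    obtain ⟨δ, hδS, hδ1⟩ := exists_lt_of_csInf_lt ⟨_, hmem⟩ hlt
    intro z hz
    have h := (hδS.2 z hz).2
    have h2 : n2sq (A.mulVec z) ≤ 2 * n2sq z := by nlinarith [n2sq_nonneg' z]
    calc n2 (A.mulVec z) = Real.sqrt (n2sq (A.mulVec z)) := rfl
      _ ≤ Real.sqrt (2 * n2sq z) := Real.sqrt_le_sqrt h2
      _ = Real.sqrt 2 * Real.sqrt (n2sq z) := Real.sqrt_mul (by norm_num) _
      _ = Real.sqrt 2 * n2 z := rfl
  -- K ≤ bestApprox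
  have hKbest : K ≤ bestApprox r M s w x := by
    have hsparse0 : Sparse r M s (0 : Fin N → ℂ) := by
      intro k hk
      have hsupp0 : supp (0 : Fin N → ℂ) = ∅ := by
        ext i; simp [supp]
      simp [hsupp0]
    rw [bestApprox]
    refine le_csInf ⟨wn1 w (x - 0), ⟨0, hsparse0, rfl⟩⟩ ?_
    rintro b ⟨z, hz, rfl⟩
    have h1 : wn1 w (x - z) = ∑ k ∈ Finset.range r, ∑ i ∈ Lv k, w i * ‖(x - z) i‖ :=
      hsum_univ _
    rw [hKdef, h1]
    refine Finset.sum_le_sum fun k hkr => ?_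
    have hk := Finset.mem_range.mp hkr
    have hwk := hwpos k hk
    have hzc : (supp z ∩ Lv k).card ≤ s k := hz k hk
    have h6 : ∑ i ∈ Lv k ∩ supp z, f i ≤ ∑ i ∈ C k, f i := by
      apply sum_inter_le_top f hf (Lv k) (C k) (Lv k ∩ supp z) (hCLv k) (hCtop k hk)
        Finset.inter_subset_left
      have h7 : (Lv k ∩ supp z).card = (supp z ∩ Lv k).card := by rw [Finset.inter_comm]
      have h8 : (Lv k ∩ supp z).card ≤ (Lv k).card :=
        Finset.card_le_card Finset.inter_subset_left
      rw [hCcard k hk]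
      omega
    have e1 : ∑ i ∈ Lv k \ C k, f i + ∑ i ∈ C k, f i = ∑ i ∈ Lv k, f i :=
      Finset.sum_sdiff (hCLv k)
    have e2 : ∑ i ∈ Lv k ∩ supp z, f i + ∑ i ∈ Lv k \ supp z, f i = ∑ i ∈ Lv k, f i :=
      Finset.sum_inter_add_sum_sdiff _ _ _
    have ht1 : t k = ∑ i ∈ Lv k \ C k, f i := by simp only [htdef, hDdef]
    have h5 : t k ≤ ∑ i ∈ Lv k \ supp z, f i := by
      rw [ht1]
      linarith
    have h4 : ∑ i ∈ Lv k \ supp z, f i ≤ ∑ i ∈ Lv k, ‖(x - z) i‖ := by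
      have heq : ∀ i ∈ Lv k \ supp z, f i = ‖(x - z) i‖ := by
        intro i hi
        have hzi : z i = 0 := by
          have h9 := (Finset.mem_sdiff.mp hi).2
          simp [supp] at h9
          exact h9
        show ‖x i‖ = ‖(x - z) i‖
        simp [hzi]
      calc ∑ i ∈ Lv k \ supp z, f i = ∑ i ∈ Lv k \ supp z, ‖(x - z) i‖ :=
            Finset.sum_congr rfl heq
        _ ≤ ∑ i ∈ Lv k, ‖(x - z) i‖ :=
            Finset.sum_le_sum_of_subset_of_nonneg Finset.sdiff_subset
              fun i _ _ => norm_nonneg _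
    have h3 : ∑ i ∈ Lv k, w i * ‖(x - z) i‖ = ∑ i ∈ Lv k, wl k * ‖(x - z) i‖ :=
      Finset.sum_congr rfl fun i hi => by rw [hw k hk i hi]
    calc wl k * t k ≤ wl k * ∑ i ∈ Lv k, ‖(x - z) i‖ :=
          mul_le_mul_of_nonneg_left (h5.trans h4) hwk.le
      _ = ∑ i ∈ Lv k, wl k * ‖(x - z) i‖ := Finset.mul_sum _ _ _
      _ = ∑ i ∈ Lv k, w i * ‖(x - z) i‖ := h3.symm
  -- tail ℓ² bound
  have hn2P : n2 (proj (Finset.univ \ Ξ) x) ≤ K / Real.sqrt ξ := by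
    have hPsq : n2sq (proj (Finset.univ \ Ξ) x)
        = ∑ k ∈ Finset.range r, ∑ i ∈ Lv k \ Ξ, f i ^ 2 := by
      rw [n2sq_proj, hsetΞ]
      exact Finset.sum_biUnion hLvΞPD
    have hlvl2 : ∀ k < r, ∑ i ∈ Lv k \ Ξ, f i ^ 2 ≤ t k ^ 2 / (s k : ℝ) := by
      intro k hk
      have hres := level_sq_bound f hf (Lv k \ Ξ) (B k 0) (D k) (s k) (hs k hk) (hB0card k hk)
        (fun p hp q hq => by
          rw [hB0] at hq
          exact hΞ.2 k hk q (Finset.mem_sdiff.mp hq).1 p hp)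
        (Finset.sdiff_subset_sdiff (Finset.Subset.refl _) (hCΞ k)) (hBsubD k 0)
      have ht1 : t k = ∑ i ∈ D k, f i := by simp only [htdef]
      rw [ht1]
      exact hres
    have h1 : n2sq (proj (Finset.univ \ Ξ) x) ≤ ∑ k ∈ Finset.range r, (wl k * t k) ^ 2 / ξ := by
      rw [hPsq]
      refine Finset.sum_le_sum fun k hkr => ?_
      have hk := Finset.mem_range.mp hkr
      refine (hlvl2 k hk).trans ?_
      have hsk : (0:ℝ) < (s k : ℝ) := by exact_mod_cast hs k hk
      rw [div_le_div_iff₀ hsk hξpos]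
      have h2 := hξle k hk
      nlinarith [mul_le_mul_of_nonneg_left h2 (sq_nonneg (t k))]
    have h2 : n2 (proj (Finset.univ \ Ξ) x)
        ≤ Real.sqrt (∑ k ∈ Finset.range r, (wl k * t k) ^ 2 / ξ) := Real.sqrt_le_sqrt h1
    refine h2.trans ?_
    rw [← Finset.sum_div, Real.sqrt_div (by positivity)]
    rw [div_le_div_iff₀ hsqrtξ hsqrtξ]
    apply mul_le_mul_of_nonneg_right _ hsqrtξ.le
    refine (sqrt_sum_sq_le_sum fun k hkr =>
      mul_nonneg (hwpos k (Finset.mem_range.mp hkr)).le (htnn k)).trans ?_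
    rw [hKdef]
  -- block decomposition and bound
  have hPdecomp : proj (Finset.univ \ Ξ) x = ∑ j ∈ Finset.range N, proj (Z j) x := by
    rw [hsetΞ, proj_biUnion _ _ _ (fun a ha b hb hab => by
      show Disjoint (Lv a \ Ξ) (Lv b \ Ξ)
      exact hLvΞPD (Finset.mem_coe.mpr ha) (Finset.mem_coe.mpr hb) hab)]
    have hstep : ∀ k ∈ Finset.range r,
        proj (Lv k \ Ξ) x = ∑ j ∈ Finset.range N, proj (B k (j+1)) x := by
      intro k hkr
      have hk := Finset.mem_range.mp hkr
      rw [hcoverTail k hk]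
      refine proj_biUnion _ _ _ fun a _ b _ hab => ?_
      show Disjoint (B k (a+1)) (B k (b+1))
      rcases hab.lt_or_gt with h | h
      · exact hBdisj k _ _ (Nat.succ_lt_succ h)
      · exact (hBdisj k _ _ (Nat.succ_lt_succ h)).symm
    rw [Finset.sum_congr rfl hstep, Finset.sum_comm]
    refine Finset.sum_congr rfl fun j hj => ?_
    have hZj : Z j = (Finset.range r).biUnion fun k => B k (j+1) := by simp only [hZdef]
    rw [hZj]
    refine (proj_biUnion _ _ _ fun a ha b hb hab => ?_).symm
    show Disjoint (B a (j+1)) (B b (j+1))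
    exact Finset.disjoint_of_subset_left (hBsubLv a (j+1))
      (Finset.disjoint_of_subset_right (hBsubLv b (j+1))
        (hLvPD (Finset.mem_coe.mpr ha) (Finset.mem_coe.mpr hb) hab))
  have hsparseZ : ∀ j, Sparse r M s (proj (Z j) x) := by
    intro j k hk
    have h1 : supp (proj (Z j) x) ∩ level N M k ⊆ B k (j+1) := by
      intro i hi
      rcases Finset.mem_inter.mp hi with ⟨hi1, hi2⟩
      have h2 : i ∈ Z j := supp_proj_subset _ _ hi1
      have hZj : Z j = (Finset.range r).biUnion fun k => B k (j+1) := by simp only [hZdef]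
      rw [hZj] at h2
      obtain ⟨k', hk', hik'⟩ := Finset.mem_biUnion.mp h2
      by_cases hkk : k' = k
      · subst hkk; exact hik'
      · exfalso
        have h3 : i ∈ Lv k' := hBsubLv k' (j+1) hik'
        exact Finset.disjoint_left.mp
          (level_disjoint hM (Finset.mem_range.mp hk') hk hkk) h3 hi2
    calc (supp (proj (Z j) x) ∩ level N M k).card ≤ (B k (j+1)).card :=
          Finset.card_le_card h1
      _ = min (s k) ((R k j).card) := hBcard k j
      _ ≤ s k := min_le_left _ _
  have hZn2 : ∀ j, n2 (proj (Z j) x) ≤ (∑ k ∈ Finset.range r, wl k * u k j) / Real.sqrt ξ := by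
    intro j
    have hZsq : n2sq (proj (Z j) x) = ∑ k ∈ Finset.range r, ∑ i ∈ B k (j+1), f i ^ 2 := by
      have hZj : Z j = (Finset.range r).biUnion fun k => B k (j+1) := by simp only [hZdef]
      rw [n2sq_proj, hZj]
      exact Finset.sum_biUnion (hBPD j)
    have h1 : n2sq (proj (Z j) x) ≤ ∑ k ∈ Finset.range r, (wl k * u k j) ^ 2 / ξ := by
      rw [hZsq]
      refine Finset.sum_le_sum fun k hkr => ?_
      have hk := Finset.mem_range.mp hkr
      have hsk : (0:ℝ) < (s k : ℝ) := by exact_mod_cast hs k hk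
      have hb := block_sq_bound f hf (B k (j+1)) (B k j) (s k) (hs k hk)
        (by rw [hBcard k j]; exact min_le_left _ _)
        (hfull k hk j) (hdomB k hk j)
      refine hb.trans ?_
      have h3 : u k j = ∑ i ∈ B k j, f i := by simp only [hudef]
      rw [← h3, div_le_div_iff₀ hsk hξpos]
      have h2 := hξle k hk
      nlinarith [mul_le_mul_of_nonneg_left h2 (sq_nonneg (u k j))]
    have h2 : n2 (proj (Z j) x)
        ≤ Real.sqrt (∑ k ∈ Finset.range r, (wl k * u k j) ^ 2 / ξ) := Real.sqrt_le_sqrt h1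
    refine h2.trans ?_
    rw [← Finset.sum_div, Real.sqrt_div (by positivity)]
    rw [div_le_div_iff₀ hsqrtξ hsqrtξ]
    apply mul_le_mul_of_nonneg_right _ hsqrtξ.le
    exact sqrt_sum_sq_le_sum fun k hkr =>
      mul_nonneg (hwpos k (Finset.mem_range.mp hkr)).le (hunn k j)
  have hsumu : ∑ j ∈ Finset.range N, ∑ k ∈ Finset.range r, wl k * u k j ≤ K := by
    rw [Finset.sum_comm, hKdef]
    refine Finset.sum_le_sum fun k hkr => ?_
    have hk := Finset.mem_range.mp hkr
    rw [← Finset.mul_sum]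
    apply mul_le_mul_of_nonneg_left _ (hwpos k hk).le
    have h1 : ∑ j ∈ Finset.range N, u k j = ∑ i ∈ (Finset.range N).biUnion (B k), f i := by
      rw [Finset.sum_biUnion (hBjPD k)]
    have h2 : t k = ∑ i ∈ D k, f i := by simp only [htdef]
    rw [h1, h2]
    apply Finset.sum_le_sum_of_subset_of_nonneg _ fun i _ _ => hf i
    exact Finset.biUnion_subset.mpr fun j _ => hBsubD k j
  -- assembly
  have hAPe : n2 (A.mulVec (proj (Finset.univ \ Ξ) x) + e) ≤
      Real.sqrt 2 * (K / Real.sqrt ξ) + n2 e := by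
    have hs2 : (0:ℝ) ≤ Real.sqrt 2 := Real.sqrt_nonneg 2
    have h2 : A.mulVec (proj (Finset.univ \ Ξ) x)
        = ∑ j ∈ Finset.range N, A.mulVec (proj (Z j) x) := by
      rw [hPdecomp]
      simp only [← Matrix.mulVecLin_apply, map_sum]
    have h3 : n2 (A.mulVec (proj (Finset.univ \ Ξ) x))
        ≤ ∑ j ∈ Finset.range N, n2 (A.mulVec (proj (Z j) x)) := by
      rw [h2]
      exact n2_sum_le _ _
    have h4 : ∑ j ∈ Finset.range N, n2 (A.mulVec (proj (Z j) x))
        ≤ ∑ j ∈ Finset.range N, Real.sqrt 2 * n2 (proj (Z j) x) :=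
      Finset.sum_le_sum fun j _ => hA2 _ (hsparseZ j)
    have h5 : ∑ j ∈ Finset.range N, Real.sqrt 2 * n2 (proj (Z j) x)
        ≤ Real.sqrt 2 * (K / Real.sqrt ξ) := by
      rw [← Finset.mul_sum]
      apply mul_le_mul_of_nonneg_left _ hs2
      have h6 : ∑ j ∈ Finset.range N, n2 (proj (Z j) x)
          ≤ ∑ j ∈ Finset.range N, (∑ k ∈ Finset.range r, wl k * u k j) / Real.sqrt ξ :=
        Finset.sum_le_sum fun j _ => hZn2 j
      refine h6.trans ?_
      rw [← Finset.sum_div]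
      rw [div_le_div_iff₀ hsqrtξ hsqrtξ]
      exact mul_le_mul_of_nonneg_right hsumu hsqrtξ.le
    have h7 := n2_add_le (A.mulVec (proj (Finset.univ \ Ξ) x)) e
    linarith
  have hsplit : x - x' = proj (Finset.univ \ Ξ) x + (proj Ξ x - x') := by
    funext i
    simp only [Pi.add_apply, Pi.sub_apply, proj]
    by_cases hi : i ∈ Ξ
    · rw [if_pos hi, if_neg (by simp [hi])]
      ring
    · rw [if_neg hi, if_pos (by simp [hi])]
      ring
  have hs2nn : (0:ℝ) ≤ Real.sqrt 2 := Real.sqrt_nonneg 2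
  have hconn : (0:ℝ) ≤ (1 + Real.sqrt 2 * τ) / Real.sqrt ξ := by
    apply div_nonneg _ hsqrtξ.le
    nlinarith [hτ.le]
  calc n2 (x - x') ≤ n2 (proj (Finset.univ \ Ξ) x) + n2 (proj Ξ x - x') := by
        rw [hsplit]; exact n2_add_le _ _
    _ ≤ K / Real.sqrt ξ + (τ * n2 (A.mulVec (proj (Finset.univ \ Ξ) x) + e) + lam) :=
        add_le_add hn2P hnear
    _ ≤ K / Real.sqrt ξ + (τ * (Real.sqrt 2 * (K / Real.sqrt ξ) + n2 e) + lam) := by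
        have := mul_le_mul_of_nonneg_left hAPe hτ.le
        linarith
    _ = (1 + Real.sqrt 2 * τ) * (K / Real.sqrt ξ) + τ * n2 e + lam := by ring
    _ ≤ (1 + Real.sqrt 2 * τ) / Real.sqrt ξ * bestApprox r M s w x + τ * n2 e + lam := by
        have h1 : (1 + Real.sqrt 2 * τ) * (K / Real.sqrt ξ) =
            (1 + Real.sqrt 2 * τ) / Real.sqrt ξ * K := by ring
        have h2 := mul_le_mul_of_nonneg_left hKbest hconn
        linarith

end SIL
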